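/- Let X, Y be Hilbert spaces, A ∈ B(X,Y), and T, T' ⊆ X, S, S' ⊆ Y closed subspaces such that G = A_{T,S}^{(2)} exists and max{δ̂(T,T'), δ̂(S,S')} < 1/(1 + ‖A‖·‖G‖)². Then ‖A_{T',S'}^{(2)} − A_{T,S}^{(2)}‖ ≤ ((1+√5)/2) · ‖G‖²·‖A‖·(δ̂(T,T') + δ̂(S,S')) / (1 − ‖G‖·‖A‖·(δ̂(T,T') + δ̂(S,S'))). -/

import Mathlib

noncomputable section

open ContinuousLinearMap

/-- δ(M,N) = sup{dist(x,N) : x ∈ M, ‖x‖ = 1}, with sSup ∅ = 0 covering M = {0}. -/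
def gapDelta {H : Type*} [NormedAddCommGroup H] (M N : Set H) : ℝ :=
  sSup ((fun x => Metric.infDist x N) '' {x | x ∈ M ∧ ‖x‖ = 1})

/-- The gap δ̂(M,N) = max{δ(M,N), δ(N,M)}. -/
def gapHat {H : Type*} [NormedAddCommGroup H] (M N : Set H) : ℝ :=
  max (gapDelta M N) (gapDelta N M)

/-- Orthogonal projection onto a closed subspace, as an operator H →L[ℂ] H. -/
def projCLM {H : Type*} [NormedAddCommGroup H] [InnerProductSpace ℂ H] [CompleteSpace H]
    (K : Submodule ℂ H) (hK : IsClosed (K : Set H)) : H →L[ℂ] H :=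
  haveI := hK.completeSpace_coe
  K.subtypeL.comp K.orthogonalProjectionOnto

/-- G is the outer inverse A_{T,S}^{(2)}: GAG = G, R(G) = T, N(G) = S. -/
def IsOuterInv {X Y : Type*} [NormedAddCommGroup X] [NormedSpace ℂ X]
    [NormedAddCommGroup Y] [NormedSpace ℂ Y]
    (A : X →L[ℂ] Y) (T : Submodule ℂ X) (S : Submodule ℂ Y) (G : Y →L[ℂ] X) : Prop :=
  G ∘L (A ∘L G) = G ∧ LinearMap.range (G : Y →ₗ[ℂ] X) = T ∧ LinearMap.ker (G : Y →ₗ[ℂ] X) = S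

/-- B is the Moore–Penrose inverse of A. -/
def IsMPInv {X Y : Type*} [NormedAddCommGroup X] [InnerProductSpace ℂ X] [CompleteSpace X]
    [NormedAddCommGroup Y] [InnerProductSpace ℂ Y] [CompleteSpace Y]
    (A : X →L[ℂ] Y) (B : Y →L[ℂ] X) : Prop :=
  A ∘L (B ∘L A) = A ∧ B ∘L (A ∘L B) = B ∧
  adjoint (A ∘L B) = A ∘L B ∧ adjoint (B ∘L A) = B ∘L A

/-!
For closed subspaces `U, V` with `δ̂(U, V) < 1`, Kato's operator
`D = P_V P_U + (1 - P_V)(1 - P_U) = 1 + (P_V - P_U)(2 P_U - 1)` is invertible, maps `U` onto `V`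
and satisfies `‖D - 1‖ ≤ δ̂(U, V)`. Conjugating `G` by such operators for `(T, T')` and `(S, S')`
gives the outer inverse `H` with range `T'` and kernel `S'` of a nearby operator `B`, and then
`H (1 + (A - B) H)⁻¹` is `A_{T',S'}^{(2)}`.

For the bound we pass through `G₁ = A_{T',S}^{(2)}`. On a Hilbert space a nonzero idempotent `F`
satisfies `‖1 - F‖ ≤ ‖F‖`; applied to `GA` and `AG₁` this gives
`‖G₁ - G‖ ≤ ‖A‖ ‖G‖ δ(T', T) ‖G₁‖` and `‖G' - G₁‖ ≤ ‖A‖ δ(S, S') ‖G₁‖ ‖G'‖`. The gap condition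
makes `‖A‖ ‖G‖ δ < 1/4`, and the two estimates combine to the claim with the constant
`3/2 ≤ (1 + √5)/2`.
-/

section Normed
variable {𝕜 E : Type*} [NontriviallyNormedField 𝕜] [NormedAddCommGroup E] [NormedSpace 𝕜 E]

lemma exists_continuousLinearEquiv_apply_eq_add [CompleteSpace E] (Δ : E →L[𝕜] E)
    (hΔ : ‖Δ‖ < 1) : ∃ D : E ≃L[𝕜] E, ∀ x, D x = x + Δ x := by
  obtain ⟨u, hu⟩ := isUnit_one_sub_of_norm_lt_one (x := -Δ) (by rwa [norm_neg])
  refine ⟨ContinuousLinearEquiv.ofUnit u, fun x => ?_⟩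
  change (u : E →L[𝕜] E) x = _
  simp [hu]

lemma one_sub_mul_norm_le {f : E → E} {δ : ℝ} (hf : ∀ x, ‖f x - x‖ ≤ δ * ‖x‖) (x : E) :
    (1 - δ) * ‖x‖ ≤ ‖f x‖ := by
  have := norm_sub_norm_le x (x - f x)
  rw [sub_sub_cancel, norm_sub_rev] at this
  linarith [hf x]

end Normed

lemma IsIdempotentElem.one_le_norm {R : Type*} [NormedRing R] {p : R} (hp : IsIdempotentElem p)
    (h0 : p ≠ 0) : 1 ≤ ‖p‖ := by
  have hpos : 0 < ‖p‖ := norm_pos_iff.mpr h0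
  have : ‖p‖ ≤ ‖p‖ * ‖p‖ := by
    conv_lhs => rw [← hp.eq]
    exact norm_mul_le p p
  nlinarith

lemma norm_sub_mul_le_of_two_steps {E : Type*} [SeminormedAddCommGroup E] {x y z : E} {s t : ℝ}
    (hs : 0 ≤ s) (ht : 0 ≤ t) (hs4 : s * ‖x‖ < 1 / 4) (ht4 : t * ‖x‖ < 1 / 4)
    (hy : ‖y - x‖ ≤ s * ‖x‖ * ‖y‖) (hz : ‖z - y‖ ≤ t * ‖y‖ * ‖z‖) :
    ‖z - x‖ * (1 - (s + t) * ‖x‖) ≤ 3 / 2 * ((s + t) * ‖x‖ ^ 2) := by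
  have hx := norm_nonneg x
  have hyx : (1 - s * ‖x‖) * ‖y‖ ≤ ‖x‖ := by
    linarith [norm_le_insert' y x]
  have hy43 : ‖y‖ ≤ 4 / 3 * ‖x‖ := by nlinarith [norm_nonneg y]
  have hzy : (1 - t * ‖y‖) * ‖z‖ ≤ ‖y‖ := by
    linarith [norm_le_insert' z y]
  have hzx : (1 - (s + t) * ‖x‖) * ‖z‖ ≤ ‖x‖ := by
    have : t * ‖y‖ * (1 - s * ‖x‖) ≤ t * ‖x‖ := by nlinarith
    nlinarith [norm_nonneg z]
  have hd : ‖z - x‖ ≤ s * ‖x‖ * ‖y‖ + t * ‖y‖ * ‖z‖ := by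
    calc ‖z - x‖ = ‖(z - y) + (y - x)‖ := by rw [sub_add_sub_cancel]
      _ ≤ _ := (norm_add_le _ _).trans (by linarith)
  have h1 : 0 ≤ 1 - (s + t) * ‖x‖ := by linarith
  calc ‖z - x‖ * (1 - (s + t) * ‖x‖)
      ≤ (s * ‖x‖ * ‖y‖ + t * ‖y‖ * ‖z‖) * (1 - (s + t) * ‖x‖) := by gcongr
    _ ≤ s * ‖x‖ * ((1 - s * ‖x‖) * ‖y‖) + t * ‖y‖ * ((1 - (s + t) * ‖x‖) * ‖z‖) := by
        nlinarith [mul_nonneg (mul_nonneg (mul_nonneg hs hx) (norm_nonneg y)) (mul_nonneg ht hx)]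
    _ ≤ s * ‖x‖ * ‖x‖ + t * (4 / 3 * ‖x‖) * ‖x‖ := by gcongr
    _ ≤ 3 / 2 * ((s + t) * ‖x‖ ^ 2) := by nlinarith [mul_nonneg ht (sq_nonneg ‖x‖)]

lemma mul_lt_quarter_of_lt_one_div_one_add_sq {κ δ : ℝ} (hκ : 0 ≤ κ)
    (hδ : δ < 1 / (1 + κ) ^ 2) : κ * δ < 1 / 4 := by
  rcases le_or_gt δ 0 with h | h
  · nlinarith
  rw [lt_div_iff₀ (by positivity)] at hδ
  nlinarith [mul_nonneg h.le (sq_nonneg (1 - κ))]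

section Gap
variable {𝕜 H : Type*} [RCLike 𝕜] [NormedAddCommGroup H]

lemma gapDelta_nonneg (M N : Set H) : 0 ≤ gapDelta M N :=
  Real.sSup_nonneg <| by
    rintro _ ⟨x, -, rfl⟩
    exact Metric.infDist_nonneg

lemma gapHat_nonneg (M N : Set H) : 0 ≤ gapHat M N :=
  (gapDelta_nonneg M N).trans (le_max_left _ _)

lemma gapHat_self (M : Set H) : gapHat M M = 0 := by
  have hδ : gapDelta M M = 0 := by
    refine le_antisymm (Real.sSup_le ?_ le_rfl) (gapDelta_nonneg M M)
    rintro _ ⟨x, ⟨hx, -⟩, rfl⟩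
    exact (Metric.infDist_zero_of_mem hx).le
  rw [gapHat, hδ, max_self]

variable [InnerProductSpace 𝕜 H]

lemma infDist_le_gapDelta {M : Set H} {N : Submodule 𝕜 H} {x : H} (hx : x ∈ M) (hx1 : ‖x‖ = 1) :
    Metric.infDist x N ≤ gapDelta M N := by
  refine le_csSup ⟨1, ?_⟩ ⟨x, ⟨hx, hx1⟩, rfl⟩
  rintro _ ⟨y, ⟨-, hy1⟩, rfl⟩
  simpa [hy1] using Metric.infDist_le_dist_of_mem (x := y) N.zero_mem

lemma infDist_eq_norm_sub_starProjection (N : Submodule 𝕜 H) [N.HasOrthogonalProjection] (x : H) :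
    Metric.infDist x N = ‖x - N.starProjection x‖ := by
  simp only [N.starProjection_minimal, Metric.infDist_eq_iInf, dist_eq_norm]
  rfl

lemma norm_sub_starProjection_le {M N : Submodule 𝕜 H} [N.HasOrthogonalProjection] {x : H}
    (hx : x ∈ M) : ‖x - N.starProjection x‖ ≤ gapDelta (M : Set H) N * ‖x‖ := by
  rcases eq_or_ne x 0 with rfl | hx0
  · simp
  have hnx : 0 < ‖x‖ := norm_pos_iff.mpr hx0
  set c : 𝕜 := ((‖x‖⁻¹ : ℝ) : 𝕜)
  have hc : ‖c‖ = ‖x‖⁻¹ := by simp [c]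
  have hcx : ‖c • x‖ = 1 := by rw [norm_smul, hc, inv_mul_cancel₀ hnx.ne']
  have h := infDist_le_gapDelta (N := N) (M.smul_mem c hx) hcx
  rw [infDist_eq_norm_sub_starProjection, map_smul, ← smul_sub, norm_smul, hc,
    inv_mul_le_iff₀ hnx, mul_comm] at h
  exact h

lemma norm_starProjection_le {U V : Submodule 𝕜 H} [U.HasOrthogonalProjection]
    [V.HasOrthogonalProjection] {u : H} (hu : u ∈ Uᗮ) :
    ‖V.starProjection u‖ ≤ gapDelta (V : Set H) U * ‖u‖ := by
  have hb : V.starProjection u ∈ V := V.starProjection_apply_mem u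
  have key : ‖V.starProjection u‖ ^ 2 ≤
      ‖u‖ * ‖V.starProjection u - U.starProjection (V.starProjection u)‖ := by
    have h : inner 𝕜 (V.starProjection u) (V.starProjection u) =
        inner 𝕜 u (V.starProjection u - U.starProjection (V.starProjection u)) := by
      rw [inner_sub_right, inner_eq_zero_symm.mp ((U.mem_orthogonal u).mp hu _
        (U.starProjection_apply_mem _)), sub_zero, V.inner_starProjection_left_eq_right,
        V.starProjection_eq_self_iff.mpr hb]
    rw [← inner_self_eq_norm_sq (𝕜 := 𝕜), h]
    exact re_inner_le_norm _ _
  have hgap := norm_sub_starProjection_le (N := U) hb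
  rcases (norm_nonneg (V.starProjection u)).eq_or_lt with h0 | hpos
  · rw [← h0]
    exact mul_nonneg (gapDelta_nonneg _ _) (norm_nonneg u)
  · nlinarith [mul_le_mul_of_nonneg_left hgap (norm_nonneg u)]

lemma norm_starProjection_sub_starProjection_le (U V : Submodule 𝕜 H) [U.HasOrthogonalProjection]
    [V.HasOrthogonalProjection] (x : H) :
    ‖U.starProjection x - V.starProjection x‖ ≤ gapHat (U : Set H) V * ‖x‖ := by
  set p := U.starProjection x
  set q := Uᗮ.starProjection x
  -- an orthogonal decomposition: the first piece lies in `Vᗮ`, the second in `V`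
  have hab : p - V.starProjection x = (p - V.starProjection p) - V.starProjection q := by
    rw [sub_sub, ← map_add, U.starProjection_add_starProjection_orthogonal x]
  rw [hab]
  set a := p - V.starProjection p
  set b := V.starProjection q
  have horth : inner 𝕜 a b = 0 :=
    V.starProjection_inner_eq_zero p b (V.starProjection_apply_mem q)
  have ha : ‖a‖ ≤ gapHat (U : Set H) V * ‖p‖ :=
    (norm_sub_starProjection_le (U.starProjection_apply_mem x)).trans
      (mul_le_mul_of_nonneg_right (le_max_left _ _) (norm_nonneg _))
  have hb : ‖b‖ ≤ gapHat (U : Set H) V * ‖q‖ :=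
    (norm_starProjection_le (Uᗮ.starProjection_apply_mem x)).trans
      (mul_le_mul_of_nonneg_right (le_max_right _ _) (norm_nonneg _))
  have hsq : ‖a - b‖ ^ 2 ≤ (gapHat (U : Set H) V * ‖x‖) ^ 2 := by
    rw [norm_sub_sq (𝕜 := 𝕜), horth, map_zero, mul_pow, U.norm_sq_eq_add_norm_sq_starProjection x]
    nlinarith [mul_self_le_mul_self (norm_nonneg a) ha, mul_self_le_mul_self (norm_nonneg b) hb]
  exact (pow_le_pow_iff_left₀ (norm_nonneg _)
    (mul_nonneg (gapHat_nonneg _ _) (norm_nonneg _)) two_ne_zero).mp hsq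

theorem exists_continuousLinearEquiv_map_eq [CompleteSpace H] (U V : Submodule 𝕜 H)
    [U.HasOrthogonalProjection] [V.HasOrthogonalProjection] (h : gapHat (U : Set H) V < 1) :
    ∃ D : H ≃L[𝕜] H, U.map (D : H →ₗ[𝕜] H) = V ∧ ∀ x, ‖D x - x‖ ≤ gapHat (U : Set H) V * ‖x‖ := by
  set Δ : H →L[𝕜] H := (V.starProjection - U.starProjection) ∘L (U.reflection : H →L[𝕜] H)
  have hΔ : ∀ x, ‖Δ x‖ ≤ gapHat (U : Set H) V * ‖x‖ := fun x => by
    simpa [Δ, norm_sub_rev] using norm_starProjection_sub_starProjection_le U V (U.reflection x)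
  obtain ⟨D, hD⟩ := exists_continuousLinearEquiv_apply_eq_add Δ
    ((Δ.opNorm_le_bound (gapHat_nonneg _ _) hΔ).trans_lt h)
  have hDU : ∀ u ∈ U, D u = V.starProjection u := fun u hu => by
    simp [hD, Δ, U.reflection_mem_subspace_eq_self hu, U.starProjection_eq_self_iff.mpr hu]
  have hDUperp : ∀ w ∈ Uᗮ, D w ∈ Vᗮ := fun w hw => by
    simp [hD, Δ, U.reflection_mem_subspace_orthogonalComplement_eq_neg hw,
      U.starProjection_apply_eq_zero_iff.mpr hw, ← sub_eq_add_neg]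
  refine ⟨D, le_antisymm ?_ fun v hv => ?_, by simpa [hD] using hΔ⟩
  · rintro _ ⟨u, hu, rfl⟩
    exact (hDU u hu).symm ▸ V.starProjection_apply_mem u
  -- split `D⁻¹ v` along `U ⊕ Uᗮ`; the second summand is sent into `V ∩ Vᗮ = 0`
  set x := D.symm v
  have hsplit : D (U.starProjection x) + D (Uᗮ.starProjection x) = v := by
    rw [← map_add, U.starProjection_add_starProjection_orthogonal, D.apply_symm_apply]
  have hperp : D (Uᗮ.starProjection x) = 0 := by
    have hmem : D (Uᗮ.starProjection x) ∈ V := by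
      rw [eq_sub_of_add_eq' hsplit]
      exact V.sub_mem hv (hDU _ (U.starProjection_apply_mem x) ▸ V.starProjection_apply_mem _)
    exact (Submodule.mem_bot 𝕜).mp (V.inf_orthogonal_eq_bot ▸
      ⟨hmem, hDUperp _ (Uᗮ.starProjection_apply_mem x)⟩)
  exact ⟨U.starProjection x, U.starProjection_apply_mem x, by rwa [hperp, add_zero] at hsplit⟩

lemma IsIdempotentElem.norm_sq_add_norm_apply_sq_le {F : H →L[𝕜] H} (hF : IsIdempotentElem F)
    (h0 : F ≠ 0) {w : H} (hw : inner 𝕜 w (F w) = 0) :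
    ‖w‖ ^ 2 + ‖F w‖ ^ 2 ≤ ‖F‖ ^ 2 * ‖w‖ ^ 2 := by
  set a := ‖w‖ ^ 2
  set b := ‖F w‖ ^ 2
  have hFF : F (F w) = F w := congr($hF.eq w)
  rcases (show 0 ≤ b by positivity).eq_or_lt with hb | hb
  · have := hF.one_le_norm h0
    rw [← hb, add_zero]
    exact le_mul_of_one_le_left (by positivity) (one_le_pow₀ this)
  -- the claim is `‖F v‖ ≤ ‖F‖ ‖v‖` for the test vector `v = b w + a F w`
  set v := (b : 𝕜) • w + (a : 𝕜) • F w
  have hFv : F v = ((a + b : ℝ) : 𝕜) • F w := by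
    simp only [v, map_add, map_smul, hFF, ← add_smul, add_comm]
  have hv : ‖v‖ ^ 2 = a * b * (a + b) := by
    rw [norm_add_sq (𝕜 := 𝕜), inner_smul_left, inner_smul_right, hw]
    simp only [norm_smul, RCLike.norm_ofReal, mul_zero, map_zero, mul_pow, sq_abs]
    ring
  have hle := F.le_opNorm v
  rw [hFv, norm_smul, RCLike.norm_ofReal, abs_of_nonneg (by positivity)] at hle
  have hsq := pow_le_pow_left₀ (by positivity) hle 2
  rw [mul_pow, mul_pow, hv] at hsq
  have hab : 0 < b * (a + b) := by positivity
  nlinarith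

theorem IsIdempotentElem.norm_sub_apply_le [CompleteSpace H] {F : H →L[𝕜] H}
    (hF : IsIdempotentElem F) (h0 : F ≠ 0) (z : H) : ‖z - F z‖ ≤ ‖F‖ * ‖z‖ := by
  set K : Submodule 𝕜 H := LinearMap.ker ((1 - F : H →L[𝕜] H) : H →ₗ[𝕜] H)
  have : CompleteSpace K := (ContinuousLinearMap.isClosed_ker (1 - F)).completeSpace_coe
  have hK : ∀ y, F y ∈ K := fun y => by simp [K, ← mul_apply_eq_comp, hF.eq]
  have hKfix : ∀ y ∈ K, F y = y := fun y hy => (sub_eq_zero.mp hy).symm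
  -- only the component `w` of `z` orthogonal to `K = range F` matters
  set w := Kᗮ.starProjection z
  have hzw : z - F z = w - F w := by
    rw [← K.starProjection_add_starProjection_orthogonal z, map_add,
      hKfix _ (K.starProjection_apply_mem z)]
    abel
  have hw : inner 𝕜 w (F w) = 0 :=
    Submodule.inner_left_of_mem_orthogonal (hK w) (Kᗮ.starProjection_apply_mem z)
  have hwz : ‖w‖ ≤ ‖z‖ := Kᗮ.norm_starProjection_apply_le z
  have key := hF.norm_sq_add_norm_apply_sq_le h0 hw
  have hsq : ‖z - F z‖ ^ 2 ≤ (‖F‖ * ‖z‖) ^ 2 := by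
    rw [hzw, norm_sub_sq (𝕜 := 𝕜), hw, map_zero, mul_pow]
    nlinarith [pow_le_pow_left₀ (norm_nonneg w) hwz 2, sq_nonneg ‖F‖]
  exact (pow_le_pow_iff_left₀ (norm_nonneg _) (by positivity) two_ne_zero).mp hsq

end Gap

section OuterInverse
variable {X Y : Type*} [NormedAddCommGroup X] [NormedSpace ℂ X] [NormedAddCommGroup Y]
  [NormedSpace ℂ Y] {A B : X →L[ℂ] Y} {T : Submodule ℂ X} {S : Submodule ℂ Y} {G H : Y →L[ℂ] X}

lemma isOuterInv_iff : IsOuterInv A T S G ↔ (∀ y, G (A (G y)) = G y) ∧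
    (∀ x, x ∈ T ↔ ∃ y, G y = x) ∧ ∀ y, y ∈ S ↔ G y = 0 := by
  simp only [IsOuterInv, ContinuousLinearMap.ext_iff, SetLike.ext_iff, LinearMap.mem_range,
    LinearMap.mem_ker, ContinuousLinearMap.coe_coe, ContinuousLinearMap.comp_apply]
  exact and_congr Iff.rfl (and_congr (forall_congr' fun _ => Iff.comm)
    (forall_congr' fun _ => Iff.comm))

lemma isOuterInv_zero (A : X →L[ℂ] Y) : IsOuterInv A ⊥ ⊤ 0 :=
  isOuterInv_iff.mpr ⟨by simp, by simp [eq_comm], by simp⟩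

namespace IsOuterInv

lemma apply_apply_apply (hG : IsOuterInv A T S G) (y : Y) : G (A (G y)) = G y :=
  (isOuterInv_iff.mp hG).1 y

lemma mem_iff (hG : IsOuterInv A T S G) {x : X} : x ∈ T ↔ ∃ y, G y = x :=
  (isOuterInv_iff.mp hG).2.1 x

lemma mem_ker_iff (hG : IsOuterInv A T S G) {y : Y} : y ∈ S ↔ G y = 0 :=
  (isOuterInv_iff.mp hG).2.2 y

lemma apply_mem (hG : IsOuterInv A T S G) (y : Y) : G y ∈ T :=
  hG.mem_iff.mpr ⟨y, rfl⟩

lemma apply_apply_of_mem (hG : IsOuterInv A T S G) {x : X} (hx : x ∈ T) : G (A x) = x := by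
  obtain ⟨y, rfl⟩ := hG.mem_iff.mp hx
  exact hG.apply_apply_apply y

lemma sub_apply_mem (hG : IsOuterInv A T S G) (y : Y) : y - A (G y) ∈ S := by
  rw [hG.mem_ker_iff, map_sub, hG.apply_apply_apply, sub_self]

lemma eq_zero_iff (hG : IsOuterInv A T S G) : G = 0 ↔ T = ⊥ := by
  simp only [ContinuousLinearMap.ext_iff, Submodule.eq_bot_iff, hG.mem_iff]
  aesop

lemma ker_eq_top_of_eq_zero (hG : IsOuterInv A T S 0) : S = ⊤ :=
  Submodule.eq_top_iff'.mpr fun _ => hG.mem_ker_iff.mpr rfl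

variable {X' Y' : Type*} [NormedAddCommGroup X'] [NormedSpace ℂ X'] [NormedAddCommGroup Y']
  [NormedSpace ℂ Y']

lemma conj (hG : IsOuterInv A T S G) (D₁ : X ≃L[ℂ] X') (D₂ : Y ≃L[ℂ] Y') :
    IsOuterInv ((D₂ : Y →L[ℂ] Y') ∘L A ∘L (D₁.symm : X' →L[ℂ] X))
      (T.map (D₁ : X →ₗ[ℂ] X')) (S.map (D₂ : Y →ₗ[ℂ] Y'))
      ((D₁ : X →L[ℂ] X') ∘L G ∘L (D₂.symm : Y' →L[ℂ] Y)) := by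
  refine isOuterInv_iff.mpr ⟨fun y => ?_, fun x => ?_, fun y => ?_⟩
  · simp [hG.apply_apply_apply]
  · simp only [Submodule.mem_map_equiv, hG.mem_iff, ContinuousLinearMap.comp_apply]
    constructor
    · rintro ⟨y, hy⟩
      exact ⟨D₂ y, by simp [hy]⟩
    · rintro ⟨y, rfl⟩
      exact ⟨D₂.symm y, by simp⟩
  · simp [Submodule.mem_map_equiv, hG.mem_ker_iff]

lemma comp_symm (hH : IsOuterInv B T S H) (W : Y ≃L[ℂ] Y) (hW : ∀ y, W y = y + (A - B) (H y)) :
    IsOuterInv A T S (H ∘L (W.symm : Y →L[ℂ] Y)) := by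
  have hWS : ∀ s ∈ S, W s = s := fun s hs => by simp [hW, hH.mem_ker_iff.mp hs]
  have hWS' : ∀ s ∈ S, W.symm s = s := fun s hs => W.symm_apply_eq.mpr (hWS s hs).symm
  refine isOuterInv_iff.mpr ⟨fun y => ?_, fun x => ?_, fun y => ?_⟩
  · set z := W.symm y
    have hAH : A (H z) = W z - (z - B (H z)) := by rw [hW]; simp only [sub_apply]; abel
    simp only [ContinuousLinearMap.comp_apply, ContinuousLinearEquiv.coe_coe]
    rw [hAH, map_sub, W.symm_apply_apply, hWS' _ (hH.sub_apply_mem z), sub_sub_cancel,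
      hH.apply_apply_apply]
  · simp only [hH.mem_iff, ContinuousLinearMap.comp_apply, ContinuousLinearEquiv.coe_coe]
    exact ⟨fun ⟨y, hy⟩ => ⟨W y, by simp [hy]⟩, fun ⟨y, hy⟩ => ⟨_, hy⟩⟩
  · simp only [← hH.mem_ker_iff, ContinuousLinearMap.comp_apply, ContinuousLinearEquiv.coe_coe]
    refine ⟨fun hy => (hWS' y hy).symm ▸ hy, fun hy => ?_⟩
    rwa [← W.apply_symm_apply y, hWS _ hy]

lemma isIdempotentElem_comp (hG : IsOuterInv A T S G) : IsIdempotentElem (G ∘L A) :=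
  ContinuousLinearMap.ext fun x => hG.apply_apply_apply (A x)

lemma isIdempotentElem_comp_rev (hG : IsOuterInv A T S G) : IsIdempotentElem (A ∘L G) :=
  ContinuousLinearMap.ext fun y => congrArg A (hG.apply_apply_apply y)

lemma comp_ne_zero (hG : IsOuterInv A T S G) (hG0 : G ≠ 0) : G ∘L A ≠ 0 := fun h =>
  hG0 (ContinuousLinearMap.ext fun y => by
    rw [← hG.apply_apply_apply y, ← ContinuousLinearMap.comp_apply, h, zero_apply, zero_apply])

lemma comp_rev_ne_zero (hG : IsOuterInv A T S G) (hG0 : G ≠ 0) : A ∘L G ≠ 0 := fun h =>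
  hG0 (ContinuousLinearMap.ext fun y => by
    rw [← hG.apply_apply_apply y, ← ContinuousLinearMap.comp_apply A G, h, zero_apply, map_zero,
      zero_apply])

lemma one_le_norm_mul_norm (hG : IsOuterInv A T S G) (hG0 : G ≠ 0) : 1 ≤ ‖A‖ * ‖G‖ :=
  mul_comm ‖G‖ ‖A‖ ▸
    (hG.isIdempotentElem_comp.one_le_norm (hG.comp_ne_zero hG0)).trans (G.opNorm_comp_le A)

end IsOuterInv

end OuterInverse

lemma norm_sub_conj_comp_conj_le {X Y : Type*} [NormedAddCommGroup X] [NormedSpace ℂ X]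
    [NormedAddCommGroup Y] [NormedSpace ℂ Y] (A : X →L[ℂ] Y) (G : Y →L[ℂ] X) {D₁ : X ≃L[ℂ] X}
    {D₂ : Y ≃L[ℂ] Y} {δ₁ δ₂ : ℝ} (hδ₁ : 0 ≤ δ₁) (hδ₂ : 0 ≤ δ₂) (hδ₂1 : δ₂ < 1)
    (hD₁ : ∀ x, ‖D₁ x - x‖ ≤ δ₁ * ‖x‖) (hD₂ : ∀ y, ‖D₂ y - y‖ ≤ δ₂ * ‖y‖) :
    ‖(A - (D₂ : Y →L[ℂ] Y) ∘L A ∘L (D₁.symm : X →L[ℂ] X)) ∘L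
        ((D₁ : X →L[ℂ] X) ∘L G ∘L (D₂.symm : Y →L[ℂ] Y))‖ ≤
      ‖A‖ * ‖G‖ * (δ₁ + δ₂) / (1 - δ₂) := by
  have h1δ₂ : 0 < 1 - δ₂ := sub_pos.mpr hδ₂1
  refine ContinuousLinearMap.opNorm_le_bound _ (by positivity) fun y => ?_
  set q := D₂.symm y
  set p := G q
  have hE : A (D₁ p) - D₂ (A p) = A (D₁ p - p) - (D₂ (A p) - A p) := by
    rw [map_sub]; abel
  have hp : ‖p‖ ≤ ‖G‖ * ‖q‖ := G.le_opNorm q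
  have hq : (1 - δ₂) * ‖q‖ ≤ ‖y‖ := by
    simpa [q] using one_sub_mul_norm_le hD₂ q
  have hnorm : ‖A (D₁ p) - D₂ (A p)‖ ≤ ‖A‖ * (δ₁ + δ₂) * ‖p‖ := by
    rw [hE]
    calc _ ≤ ‖A (D₁ p - p)‖ + ‖D₂ (A p) - A p‖ := norm_sub_le _ _
      _ ≤ ‖A‖ * (δ₁ * ‖p‖) + δ₂ * (‖A‖ * ‖p‖) :=
          add_le_add ((A.le_opNorm _).trans (by gcongr; exact hD₁ p))
            ((hD₂ _).trans (by gcongr; exact A.le_opNorm p))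
      _ = _ := by ring
  simp only [ContinuousLinearMap.comp_apply, sub_apply, ContinuousLinearEquiv.coe_coe,
    ContinuousLinearEquiv.symm_apply_apply]
  rw [div_mul_eq_mul_div, le_div_iff₀ h1δ₂]
  calc _ ≤ ‖A‖ * (δ₁ + δ₂) * (‖G‖ * ‖q‖) * (1 - δ₂) := by gcongr; exact hnorm.trans (by gcongr)
    _ = ‖A‖ * ‖G‖ * (δ₁ + δ₂) * ((1 - δ₂) * ‖q‖) := by ring
    _ ≤ ‖A‖ * ‖G‖ * (δ₁ + δ₂) * ‖y‖ := by gcongr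

section Existence
variable {X Y : Type*} [NormedAddCommGroup X] [InnerProductSpace ℂ X] [CompleteSpace X]
  [NormedAddCommGroup Y] [InnerProductSpace ℂ Y] [CompleteSpace Y]
  {A : X →L[ℂ] Y} {G : Y →L[ℂ] X} {T T' : Submodule ℂ X} {S S' : Submodule ℂ Y}
  [T.HasOrthogonalProjection] [T'.HasOrthogonalProjection] [S.HasOrthogonalProjection]
  [S'.HasOrthogonalProjection]

theorem IsOuterInv.exists_of_gapHat_lt (hG : IsOuterInv A T S G) (h₁ : gapHat (T : Set X) T' < 1)
    (h₂ : gapHat (S : Set Y) S' < 1)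
    (h : ‖A‖ * ‖G‖ * (gapHat (T : Set X) T' + gapHat (S : Set Y) S') + gapHat (S : Set Y) S' < 1) :
    ∃ G', IsOuterInv A T' S' G' := by
  obtain ⟨D₁, hT', hD₁⟩ := exists_continuousLinearEquiv_map_eq T T' h₁
  obtain ⟨D₂, hS', hD₂⟩ := exists_continuousLinearEquiv_map_eq S S' h₂
  have hH := hG.conj D₁ D₂
  rw [hT', hS'] at hH
  have hE := norm_sub_conj_comp_conj_le A G (gapHat_nonneg _ _) (gapHat_nonneg _ _) h₂ hD₁ hD₂
  obtain ⟨W, hW⟩ := exists_continuousLinearEquiv_apply_eq_add _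
    (hE.trans_lt ((div_lt_one (by linarith)).mpr (by linarith)))
  exact ⟨_, hH.comp_symm W hW⟩

lemma IsOuterInv.zero_of_gapHat_lt (hG : IsOuterInv A T S 0) (h₁ : gapHat (T : Set X) T' < 1)
    (h₂ : gapHat (S : Set Y) S' < 1) : IsOuterInv A T' S' 0 := by
  obtain ⟨D₁, hT', -⟩ := exists_continuousLinearEquiv_map_eq T T' h₁
  obtain ⟨D₂, hS', -⟩ := exists_continuousLinearEquiv_map_eq S S' h₂
  rw [← hT', ← hS', hG.eq_zero_iff.mp rfl, hG.ker_eq_top_of_eq_zero, Submodule.map_bot,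
    Submodule.map_top, LinearEquiv.range]
  exact isOuterInv_zero A

end Existence

theorem IsOuterInv.norm_sub_le_of_ker_eq {X Y : Type*} [NormedAddCommGroup X]
    [InnerProductSpace ℂ X] [CompleteSpace X] [NormedAddCommGroup Y] [NormedSpace ℂ Y]
    {A : X →L[ℂ] Y} {T T' : Submodule ℂ X} [T.HasOrthogonalProjection] {S : Submodule ℂ Y}
    {G G₁ : Y →L[ℂ] X} (hG : IsOuterInv A T S G) (hG₁ : IsOuterInv A T' S G₁) (hG0 : G ≠ 0) :
    ‖G₁ - G‖ ≤ ‖A‖ * ‖G‖ * gapDelta (T' : Set X) T * ‖G₁‖ := by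
  refine ContinuousLinearMap.opNorm_le_bound _ (by positivity [gapDelta_nonneg (T' : Set X) T])
    fun z => ?_
  set q := G₁ z
  set u := q - T.starProjection q
  have hGz : G z = G (A q) := by
    rw [← sub_eq_zero, ← map_sub, ← hG.mem_ker_iff]
    exact hG₁.sub_apply_mem z
  have hdiff : (G₁ - G) z = u - (G ∘L A) u := by
    rw [sub_apply, hGz, ContinuousLinearMap.comp_apply, map_sub, map_sub,
      hG.apply_apply_of_mem (T.starProjection_apply_mem q)]
    simp only [u, q]
    abel
  have hu : ‖u‖ ≤ gapDelta (T' : Set X) T * (‖G₁‖ * ‖z‖) :=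
    (norm_sub_starProjection_le (hG₁.apply_mem z)).trans
      (by gcongr; exacts [gapDelta_nonneg _ _, G₁.le_opNorm z])
  calc ‖(G₁ - G) z‖ ≤ ‖G ∘L A‖ * ‖u‖ := by
        rw [hdiff]; exact hG.isIdempotentElem_comp.norm_sub_apply_le (hG.comp_ne_zero hG0) u
    _ ≤ ‖G‖ * ‖A‖ * (gapDelta (T' : Set X) T * (‖G₁‖ * ‖z‖)) := by
        gcongr
        exact G.opNorm_comp_le A
    _ = _ := by ring

theorem IsOuterInv.norm_sub_le_of_range_eq {X Y : Type*} [NormedAddCommGroup X]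
    [NormedSpace ℂ X] [NormedAddCommGroup Y] [InnerProductSpace ℂ Y] [CompleteSpace Y]
    {A : X →L[ℂ] Y} {T : Submodule ℂ X} {S S' : Submodule ℂ Y} [S'.HasOrthogonalProjection]
    {G₁ G' : Y →L[ℂ] X} (hG₁ : IsOuterInv A T S G₁) (hG' : IsOuterInv A T S' G') :
    ‖G' - G₁‖ ≤ ‖A‖ * gapDelta (S : Set Y) S' * ‖G₁‖ * ‖G'‖ := by
  rcases eq_or_ne G₁ 0 with rfl | hG₁0
  · rw [hG'.eq_zero_iff.mpr (hG₁.eq_zero_iff.mp rfl)]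
    simp
  refine ContinuousLinearMap.opNorm_le_bound _ (by positivity [gapDelta_nonneg (S : Set Y) S'])
    fun z => ?_
  set s := z - A (G₁ z)
  have hdiff : (G' - G₁) z = G' (s - S'.starProjection s) := by
    rw [map_sub, hG'.mem_ker_iff.mp (S'.starProjection_apply_mem s), sub_zero, map_sub,
      hG'.apply_apply_of_mem (hG₁.apply_mem z), sub_apply]
  have hs : ‖s‖ ≤ ‖A‖ * ‖G₁‖ * ‖z‖ :=
    (hG₁.isIdempotentElem_comp_rev.norm_sub_apply_le (hG₁.comp_rev_ne_zero hG₁0) z).trans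
      (by gcongr; exact A.opNorm_comp_le G₁)
  calc ‖(G' - G₁) z‖ ≤ ‖G'‖ * (gapDelta (S : Set Y) S' * ‖s‖) := by
        rw [hdiff]
        exact (G'.le_opNorm _).trans
          (by gcongr; exact norm_sub_starProjection_le (hG₁.sub_apply_mem z))
    _ ≤ ‖G'‖ * (gapDelta (S : Set Y) S' * (‖A‖ * ‖G₁‖ * ‖z‖)) := by
        gcongr
        exact gapDelta_nonneg _ _
    _ = _ := by ring

variable {X Y : Type*} [NormedAddCommGroup X] [InnerProductSpace ℂ X] [CompleteSpace X]
  [NormedAddCommGroup Y] [InnerProductSpace ℂ Y] [CompleteSpace Y]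
theorem stmt_13 (A : X →L[ℂ] Y) (T T' : Submodule ℂ X) (S S' : Submodule ℂ Y)
    (hT : IsClosed (T : Set X)) (hT' : IsClosed (T' : Set X))
    (hS : IsClosed (S : Set Y)) (hS' : IsClosed (S' : Set Y))
    (G : Y →L[ℂ] X) (hG : IsOuterInv A T S G)
    (hgap : max (gapHat (T : Set X) (T' : Set X)) (gapHat (S : Set Y) (S' : Set Y)) <
      1 / (1 + ‖A‖ * ‖G‖) ^ 2) :
    ∃ G' : Y →L[ℂ] X, IsOuterInv A T' S' G' ∧
      ‖G' - G‖ ≤ (1 + Real.sqrt 5) / 2 *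
        (‖G‖ ^ 2 * ‖A‖ * (gapHat (T : Set X) (T' : Set X) + gapHat (S : Set Y) (S' : Set Y))) /
        (1 - ‖G‖ * ‖A‖ * (gapHat (T : Set X) (T' : Set X) + gapHat (S : Set Y) (S' : Set Y))) := by
  have := hT.completeSpace_coe; have := hT'.completeSpace_coe
  have := hS.completeSpace_coe; have := hS'.completeSpace_coe
  set δ₁ := gapHat (T : Set X) T'
  set δ₂ := gapHat (S : Set Y) S'
  have hδ₁ : δ₁ < 1 / (1 + ‖A‖ * ‖G‖) ^ 2 := (le_max_left _ _).trans_lt hgap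
  have hδ₂ : δ₂ < 1 / (1 + ‖A‖ * ‖G‖) ^ 2 := (le_max_right _ _).trans_lt hgap
  rcases eq_or_ne G 0 with rfl | hG0
  · exact ⟨0, hG.zero_of_gapHat_lt (by simpa using hδ₁) (by simpa using hδ₂), by simp⟩
  have hκ := hG.one_le_norm_mul_norm hG0
  have hκδ₁ := mul_lt_quarter_of_lt_one_div_one_add_sq (by positivity) hδ₁
  have hκδ₂ := mul_lt_quarter_of_lt_one_div_one_add_sq (by positivity) hδ₂
  have h0₁ : 0 ≤ δ₁ := gapHat_nonneg _ _
  have h0₂ : 0 ≤ δ₂ := gapHat_nonneg _ _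
  obtain ⟨G₁, hG₁⟩ := hG.exists_of_gapHat_lt (S' := S) (by nlinarith) (by simp [gapHat_self])
    (by simp only [gapHat_self]; nlinarith)
  obtain ⟨G', hG'⟩ := hG.exists_of_gapHat_lt (by nlinarith) (by nlinarith) (by nlinarith)
  have hy : ‖G₁ - G‖ ≤ ‖A‖ * δ₁ * ‖G‖ * ‖G₁‖ := (hG.norm_sub_le_of_ker_eq hG₁ hG0).trans
    (by rw [mul_right_comm ‖A‖]; gcongr; exact le_max_right _ _)
  have hz : ‖G' - G₁‖ ≤ ‖A‖ * δ₂ * ‖G₁‖ * ‖G'‖ :=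
    (hG₁.norm_sub_le_of_range_eq hG').trans (by gcongr; exact le_max_left _ _)
  have key := norm_sub_mul_le_of_two_steps (by positivity) (by positivity)
    (by nlinarith) (by nlinarith) hy hz
  have hφ : 3 / 2 ≤ (1 + Real.sqrt 5) / 2 := by
    nlinarith [Real.sq_sqrt (show (0 : ℝ) ≤ 5 by norm_num), Real.sqrt_nonneg 5]
  refine ⟨G', hG', (le_div_iff₀ (by nlinarith)).mpr ?_⟩
  nlinarith [mul_le_mul_of_nonneg_right hφ (by positivity : 0 ≤ ‖G‖ ^ 2 * ‖A‖ * (δ₁ + δ₂))]
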